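/- Assume additionally a ∈ L²(ℝ^d). Let ρ₀(a) = 2 M₃(a)^{1/3} ‖a‖_{L¹}^{-1/3}, let κ_{d−1} be the volume of the unit ball in ℝ^{d−1}, let Π_r^θ(a) = { z ∈ ℝ^d : |z| ≤ ρ₀(a) and |⟨z, θ⟩| ≤ r } for r > 0 and unit vectors θ, and let r₀(a) = ((3/8)‖a‖_{L¹})² / (2 κ_{d−1} ρ₀(a)^{d−1} ‖a‖_{L²}²). Then for every unit vector θ ∈ ℝ^d and every r ∈ (0, r₀(a)], ∫_{B_{ρ₀(a)}(0) \ Π_r^θ(a)} a(z) dz ≥ (1/2) ‖a‖_{L¹}. -/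

import Mathlib

open MeasureTheory Real
open scoped ENNReal

noncomputable section

abbrev Euc (d : ℕ) := EuclideanSpace ℝ (Fin d)

lemma euc_norm_le_iff {n : ℕ} {ρ : ℝ} (hρ : 0 ≤ ρ) (y : Euc n) :
    ‖y‖ ≤ ρ ↔ ∑ i, y i ^ 2 ≤ ρ ^ 2 := by
  rw [EuclideanSpace.norm_eq]
  have hs : (0:ℝ) ≤ ∑ i, ‖y i‖ ^ 2 := by positivity
  constructor
  · intro h
    calc ∑ i, y i ^ 2 = ∑ i, ‖y i‖ ^ 2 := by simp [Real.norm_eq_abs, sq_abs]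
      _ = Real.sqrt (∑ i, ‖y i‖ ^ 2) ^ 2 := (Real.sq_sqrt hs).symm
      _ ≤ ρ ^ 2 := pow_le_pow_left₀ (Real.sqrt_nonneg _) h 2
  · intro h
    have h2 : Real.sqrt (∑ i, ‖y i‖ ^ 2) ≤ Real.sqrt (ρ ^ 2) :=
      Real.sqrt_le_sqrt (by simpa [Real.norm_eq_abs, sq_abs] using h)
    rwa [Real.sqrt_sq hρ] at h2

lemma slab_vol {n : ℕ} (θ : Euc (n + 1)) (hθ : ‖θ‖ = 1) {ρ r : ℝ} (hρ : 0 ≤ ρ) :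
    volume {z : Euc (n + 1) | ‖z‖ ≤ ρ ∧ |@inner ℝ _ _ z θ| ≤ r} ≤
      ENNReal.ofReal (2 * r) *
        (ENNReal.ofReal (ρ ^ n) * volume (Metric.ball (0 : Euc n) 1)) := by
  classical
  -- orthonormal basis with b 0 = θ
  have hcard : Module.finrank ℝ (Euc (n + 1)) = Fintype.card (Fin (n + 1)) := by
    simp [finrank_euclideanSpace_fin]
  have horth : Orthonormal ℝ (Set.restrict ({0} : Set (Fin (n + 1))) (fun _ => θ)) := by
    constructor
    · intro i; exact hθ
    · rintro ⟨i, hi⟩ ⟨j, hj⟩ hij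
      exact absurd (Subtype.ext (hi.trans hj.symm)) hij
  obtain ⟨b, hb⟩ := horth.exists_orthonormalBasis_extension_of_card_eq hcard
  have hb0 : b 0 = θ := hb 0 rfl
  -- the sets
  set A : Set ℝ := Set.Icc (-r) r with hA
  set Bset : Set (Fin n → ℝ) := {h | ∑ j, h j ^ 2 ≤ ρ ^ 2} with hBset
  have hBmeas : MeasurableSet Bset := by
    have : Bset = (fun h : Fin n → ℝ => ∑ j, h j ^ 2) ⁻¹' Set.Iic (ρ ^ 2) := rfl
    rw [this]
    exact (Finset.measurable_sum _ fun j _ => (measurable_pi_apply j).pow_const 2)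
      measurableSet_Iic
  set T : Set (Fin (n + 1) → ℝ) :=
    {g | g 0 ∈ A ∧ (fun j => g ((0 : Fin (n + 1)).succAbove j)) ∈ Bset} with hT
  have hφ := volume_preserving_piFinSuccAbove (fun _ : Fin (n + 1) => ℝ) 0
  have hTeq : T = (MeasurableEquiv.piFinSuccAbove (fun _ : Fin (n + 1) => ℝ) 0) ⁻¹' (A ×ˢ Bset) := by
    ext g
    simp only [T, MeasurableEquiv.piFinSuccAbove, Fin.removeNth, Set.mem_preimage,
      Set.mem_prod, Set.mem_setOf_eq, MeasurableEquiv.coe_mk, Equiv.coe_fn_symm_mk,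
      Fin.insertNthEquiv, Equiv.coe_fn_mk, Equiv.coe_fn_symm_mk]
    rfl
  have hTmeas : MeasurableSet T := by
    rw [hTeq]
    exact (MeasurableEquiv.piFinSuccAbove _ 0).measurable (measurableSet_Icc.prod hBmeas)
  -- transfer the slab to pi space
  have hF : MeasurePreserving
      (fun z : Euc (n + 1) => (MeasurableEquiv.toLp 2 (Fin (n + 1) → ℝ)).symm (b.repr z)) :=
    (EuclideanSpace.volume_preserving_symm_measurableEquiv_toLp (Fin (n + 1))).comp
      b.measurePreserving_repr
  have hsub : {z : Euc (n + 1) | ‖z‖ ≤ ρ ∧ |@inner ℝ _ _ z θ| ≤ r} ⊆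
      (fun z : Euc (n + 1) => (MeasurableEquiv.toLp 2 (Fin (n + 1) → ℝ)).symm (b.repr z)) ⁻¹' T := by
    rintro z ⟨h1, h2⟩
    show b.repr z 0 ∈ A ∧ (fun j => b.repr z ((0 : Fin (n + 1)).succAbove j)) ∈ Bset
    constructor
    · have : b.repr z 0 = @inner ℝ _ _ z θ := by
        rw [b.repr_apply_apply, hb0, real_inner_comm]
      rw [this]
      exact abs_le.mp h2
    · simp only [Bset, Set.mem_setOf_eq]
      have hnorm : ∑ i, (b.repr z i) ^ 2 ≤ ρ ^ 2 := by
        have := (euc_norm_le_iff hρ (b.repr z)).mp (by rw [b.repr.norm_map]; exact h1)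
        exact this
      calc ∑ j, (b.repr z ((0 : Fin (n + 1)).succAbove j)) ^ 2
          ≤ (b.repr z 0) ^ 2 + ∑ j, (b.repr z ((0 : Fin (n + 1)).succAbove j)) ^ 2 := by
            nlinarith [sq_nonneg (b.repr z 0)]
        _ = ∑ i, (b.repr z i) ^ 2 := (Fin.sum_univ_succAbove (fun i => (b.repr z i) ^ 2) 0).symm
        _ ≤ ρ ^ 2 := hnorm
  calc volume {z : Euc (n + 1) | ‖z‖ ≤ ρ ∧ |@inner ℝ _ _ z θ| ≤ r}
      ≤ volume ((fun z : Euc (n + 1) =>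
          (MeasurableEquiv.toLp 2 (Fin (n + 1) → ℝ)).symm (b.repr z)) ⁻¹' T) :=
        measure_mono hsub
    _ = volume T := hF.measure_preimage hTmeas.nullMeasurableSet
    _ = (volume.prod volume) (A ×ˢ Bset) := by
        rw [hTeq]
        exact hφ.measure_preimage (measurableSet_Icc.prod hBmeas).nullMeasurableSet
    _ = volume A * volume Bset := Measure.prod_prod _ _
    _ ≤ ENNReal.ofReal (2 * r) * (ENNReal.ofReal (ρ ^ n) * volume (Metric.ball (0 : Euc n) 1)) := by
        have hA' : volume A = ENNReal.ofReal (2 * r) := by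
          rw [hA, Real.volume_Icc]; ring_nf
        have hB' : volume Bset = ENNReal.ofReal (ρ ^ n) * volume (Metric.ball (0 : Euc n) 1) := by
          have hpre : (MeasurableEquiv.toLp 2 (Fin n → ℝ)).symm ⁻¹' Bset
              = Metric.closedBall (0 : Euc n) ρ := by
            ext y
            simp only [Set.mem_preimage, Metric.mem_closedBall, dist_zero_right]
            rw [euc_norm_le_iff hρ]
            exact Iff.rfl
          have := (EuclideanSpace.volume_preserving_symm_measurableEquiv_toLp (Fin n)).measure_preimage
            hBmeas.nullMeasurableSet
          rw [hpre] at this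
          rw [← this, Measure.addHaar_closedBall _ _ hρ, finrank_euclideanSpace_fin]
        rw [hA', hB']


/-- The radius `ρ₀(a) = 2 M₃(a)^{1/3} ‖a‖_{L¹}^{-1/3}`. -/
def rho0 {d : ℕ} (a : Euc d → ℝ) : ℝ :=
  2 * (∫ z : Euc d, ‖z‖ ^ 3 * a z) ^ ((1 : ℝ) / 3) * (∫ z : Euc d, a z) ^ (-(1 : ℝ) / 3)

/-- `κ_m`, the volume of the unit ball in `ℝ^m`. -/
def kappa (m : ℕ) : ℝ :=
  (volume (Metric.ball (0 : EuclideanSpace ℝ (Fin m)) 1)).toReal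

/-- The radius `r₀(a) = ((3/8)‖a‖_{L¹})² / (2 κ_{d-1} ρ₀(a)^{d-1} ‖a‖_{L²}²)`. -/
def r0 {d : ℕ} (a : Euc d → ℝ) : ℝ :=
  ((3 / 8) * ∫ z : Euc d, a z) ^ 2 /
    (2 * kappa (d - 1) * rho0 a ^ (d - 1) * ∫ z : Euc d, (a z) ^ 2)

/-- Mass away from slabs: for every unit vector `θ` and every `0 < r ≤ r₀(a)`,
`∫_{B_{ρ₀(a)}(0) \ Π_r^θ(a)} a(z) dz ≥ (1/2) ‖a‖_{L¹}`, where
`Π_r^θ(a) = {z : |z| ≤ ρ₀(a), |⟨z,θ⟩| ≤ r}`. -/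
theorem stmt17 {d : ℕ} (hd : 1 ≤ d)
    (a : Euc d → ℝ)
    (ha_int : Integrable a)
    (ha_L2 : MemLp a 2 (volume : Measure (Euc d)))
    (ha_nn : ∀ᵐ x : Euc d, 0 ≤ a x)
    (ha_even : ∀ x : Euc d, a (-x) = a x)
    (ha_supp : 0 < volume {x : Euc d | a x ≠ 0})
    (hM3 : Integrable fun x : Euc d => ‖x‖ ^ 3 * a x) :
    ∀ θ : Euc d, ‖θ‖ = 1 → ∀ r : ℝ, 0 < r → r ≤ r0 a →
      (1 / 2) * (∫ z : Euc d, a z)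
        ≤ ∫ z in Metric.ball (0 : Euc d) (rho0 a) \
            {z : Euc d | ‖z‖ ≤ rho0 a ∧ |@inner ℝ _ _ z θ| ≤ r}, a z := by

  intro θ hθ r hr hrr0
  obtain ⟨n, rfl⟩ : ∃ n, d = n + 1 := ⟨d - 1, (Nat.succ_pred_eq_of_pos hd).symm⟩
  classical
  set I := ∫ z : Euc (n + 1), a z with hIdef
  set M := ∫ z : Euc (n + 1), ‖z‖ ^ 3 * a z with hMdef
  have hI : 0 < I := by
    rw [hIdef, integral_pos_iff_support_of_nonneg_ae ha_nn ha_int]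
    exact ha_supp
  have h3nn : ∀ᵐ x : Euc (n + 1), 0 ≤ ‖x‖ ^ 3 * a x := by
    filter_upwards [ha_nn] with x hx
    exact mul_nonneg (by positivity) hx
  have hM : 0 < M := by
    rw [hMdef, integral_pos_iff_support_of_nonneg_ae h3nn hM3]
    have hsub : {x : Euc (n + 1) | a x ≠ 0} \ {0} ⊆
        Function.support fun x : Euc (n + 1) => ‖x‖ ^ 3 * a x := by
      rintro x ⟨hx, hx0⟩
      simp only [Set.mem_singleton_iff] at hx0
      simp only [Function.mem_support]
      exact mul_ne_zero (pow_ne_zero 3 (norm_ne_zero_iff.mpr hx0)) hx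
    calc (0 : ℝ≥0∞) < volume {x : Euc (n + 1) | a x ≠ 0} := ha_supp
      _ = volume ({x : Euc (n + 1) | a x ≠ 0} \ {0}) :=
          (measure_diff_null (measure_singleton 0)).symm
      _ ≤ _ := measure_mono hsub
  have hrho : rho0 a = 2 * M ^ ((1 : ℝ) / 3) * I ^ (-(1 : ℝ) / 3) := rfl
  have hρpos : 0 < rho0 a := by
    rw [hrho]
    exact mul_pos (mul_pos two_pos (Real.rpow_pos_of_pos hM ((1 : ℝ) / 3)))
      (Real.rpow_pos_of_pos hI (-(1 : ℝ) / 3))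
  have hρ3 : (rho0 a) ^ 3 = 8 * M / I := by
    have h13 : (M ^ ((1 : ℝ) / 3)) ^ (3 : ℕ) = M := by
      rw [← Real.rpow_natCast (M ^ ((1 : ℝ) / 3)) 3, ← Real.rpow_mul hM.le]
      norm_num
    have hI3 : (I ^ (-(1 : ℝ) / 3)) ^ (3 : ℕ) = I⁻¹ := by
      rw [← Real.rpow_natCast (I ^ (-(1 : ℝ) / 3)) 3, ← Real.rpow_mul hI.le]
      norm_num [Real.rpow_neg_one]
    have : (rho0 a) ^ 3 = 8 * (M ^ ((1 : ℝ) / 3)) ^ (3 : ℕ) * (I ^ (-(1 : ℝ) / 3)) ^ (3 : ℕ) := by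
      rw [hrho]; ring
    rw [this, h13, hI3, div_eq_mul_inv]
  -- Markov bound outside the ball
  set B := Metric.ball (0 : Euc (n + 1)) (rho0 a) with hBdef
  have hcompl_le : ∫ z in Bᶜ, a z ≤ I / 8 := by
    have hptwise : (fun z => (rho0 a) ^ 3 * a z) ≤ᵐ[volume.restrict Bᶜ]
        fun z => ‖z‖ ^ 3 * a z := by
      filter_upwards [ae_restrict_mem measurableSet_ball.compl, ae_restrict_of_ae ha_nn]
        with z hz hza
      have hz' : rho0 a ≤ ‖z‖ := by
        simpa [B, Metric.mem_ball, dist_zero_right, not_lt] using hz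
      exact mul_le_mul_of_nonneg_right (pow_le_pow_left₀ hρpos.le hz' 3) hza
    have hstep1 : ∫ z in Bᶜ, (rho0 a) ^ 3 * a z ≤ M := by
      calc ∫ z in Bᶜ, (rho0 a) ^ 3 * a z ≤ ∫ z in Bᶜ, ‖z‖ ^ 3 * a z :=
            setIntegral_mono_ae_restrict ((ha_int.const_mul _).integrableOn)
              hM3.integrableOn hptwise
        _ ≤ M := setIntegral_le_integral hM3 h3nn
    rw [integral_const_mul] at hstep1
    have h8 : M / (rho0 a) ^ 3 = I / 8 := by
      rw [hρ3]
      field_simp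
    have := (le_div_iff₀ (pow_pos hρpos 3)).mpr (by linarith [hstep1] : (∫ z in Bᶜ, a z) * (rho0 a) ^ 3 ≤ M)
    rwa [h8] at this
  have hB_ge : (7 / 8) * I ≤ ∫ z in B, a z := by
    have hsplit : (∫ z in B, a z) + ∫ z in Bᶜ, a z = ∫ z : Euc (n + 1), a z :=
      integral_add_compl measurableSet_ball ha_int
    linarith [hcompl_le, hsplit, hIdef]
  -- the slab
  set P := {z : Euc (n + 1) | ‖z‖ ≤ rho0 a ∧ |@inner ℝ _ _ z θ| ≤ r} with hPdef
  have hPmeas : MeasurableSet P := by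
    have h1 : IsClosed {z : Euc (n + 1) | ‖z‖ ≤ rho0 a} :=
      isClosed_le continuous_norm continuous_const
    have h2 : IsClosed {z : Euc (n + 1) | |@inner ℝ _ _ z θ| ≤ r} :=
      isClosed_le (continuous_abs.comp (continuous_id.inner continuous_const)) continuous_const
    have : P = {z : Euc (n + 1) | ‖z‖ ≤ rho0 a} ∩ {z : Euc (n + 1) | |@inner ℝ _ _ z θ| ≤ r} := by
      ext z; simp [P, Set.mem_inter_iff]
    rw [this]
    exact (h1.inter h2).measurableSet
  have hvolP : volume P ≤ ENNReal.ofReal (2 * r) *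
      (ENNReal.ofReal ((rho0 a) ^ n) * volume (Metric.ball (0 : Euc n) 1)) :=
    slab_vol θ hθ hρpos.le
  have hballfin : volume (Metric.ball (0 : Euc n) 1) ≠ ⊤ := measure_ball_lt_top.ne
  have hκpos : 0 < kappa n := by
    rw [kappa]
    exact ENNReal.toReal_pos (Metric.measure_ball_pos volume 0 one_pos).ne' hballfin
  have hRHSfin : ENNReal.ofReal (2 * r) *
      (ENNReal.ofReal ((rho0 a) ^ n) * volume (Metric.ball (0 : Euc n) 1)) ≠ ⊤ := by
    exact ENNReal.mul_ne_top ENNReal.ofReal_ne_top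
      (ENNReal.mul_ne_top ENNReal.ofReal_ne_top hballfin)
  have hPfin : volume P < ⊤ := lt_of_le_of_lt hvolP (lt_of_le_of_ne le_top hRHSfin)
  have hVle : (volume P).toReal ≤ 2 * r * ((rho0 a) ^ n * kappa n) := by
    have := ENNReal.toReal_mono hRHSfin hvolP
    rwa [ENNReal.toReal_mul, ENNReal.toReal_mul, ENNReal.toReal_ofReal (by positivity),
      ENNReal.toReal_ofReal (by positivity), ← kappa] at this
  -- Cauchy-Schwarz on the slab
  have hL2int : Integrable (fun z : Euc (n + 1) => a z ^ 2) := ha_L2.integrable_sq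
  have hsqnn : ∀ᵐ x : Euc (n + 1), 0 ≤ a x ^ 2 := Filter.Eventually.of_forall fun x => sq_nonneg _
  have hI2 : 0 < ∫ z : Euc (n + 1), a z ^ 2 := by
    rw [integral_pos_iff_support_of_nonneg_ae hsqnn hL2int]
    have : (Function.support fun x : Euc (n + 1) => a x ^ 2) = {x : Euc (n + 1) | a x ≠ 0} := by
      ext x
      simp [Function.mem_support, pow_eq_zero_iff]
    rw [this]
    exact ha_supp
  haveI : IsFiniteMeasure (volume.restrict P) :=
    ⟨by rwa [Measure.restrict_apply_univ]⟩
  have hconj : Real.HolderConjugate 2 2 := Real.holderConjugate_iff.mpr ⟨one_lt_two, by norm_num⟩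
  have hmemf : MemLp a (ENNReal.ofReal 2) (volume.restrict P) := by
    have h2 : (ENNReal.ofReal 2) = (2 : ℝ≥0∞) := by norm_num
    rw [h2]
    exact ha_L2.restrict P
  have hmemg : MemLp (fun _ : Euc (n + 1) => (1 : ℝ)) (ENNReal.ofReal 2) (volume.restrict P) :=
    memLp_const 1
  have hCS := integral_mul_le_Lp_mul_Lq_of_nonneg hconj (ae_restrict_of_ae ha_nn)
    (Filter.Eventually.of_forall fun _ => zero_le_one) hmemf hmemg
  simp only [mul_one, Real.rpow_two, one_pow] at hCS
  -- hCS : ∫ z in P, a z ≤ (∫ z in P, a z ^ 2) ^ (1/2 : ℝ) * (∫ z in P, (1:ℝ)) ^ (1/2 : ℝ)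
  have hconst : ∫ _ in P, (1 : ℝ) = (volume P).toReal := by
    simp [Measure.restrict_apply_univ, Measure.real]
  rw [hconst] at hCS
  set X := ∫ z in P, a z ^ 2 with hXdef
  have hXnn : 0 ≤ X := by
    rw [hXdef]
    exact setIntegral_nonneg hPmeas fun x _ => sq_nonneg _
  have hXle : X ≤ ∫ z : Euc (n + 1), a z ^ 2 :=
    setIntegral_le_integral hL2int hsqnn
  have hVnn : (0:ℝ) ≤ (volume P).toReal := ENNReal.toReal_nonneg
  have hD : 0 < 2 * kappa n * (rho0 a) ^ n * ∫ z : Euc (n + 1), a z ^ 2 := by positivity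
  have hr0eq : r0 a = ((3 / 8) * I) ^ 2 /
      (2 * kappa n * (rho0 a) ^ n * ∫ z : Euc (n + 1), a z ^ 2) := rfl
  have hrD : r * (2 * kappa n * (rho0 a) ^ n * ∫ z : Euc (n + 1), a z ^ 2)
      ≤ ((3 / 8) * I) ^ 2 := by
    rw [hr0eq] at hrr0
    exact (le_div_iff₀ hD).mp hrr0
  have hXV : X * (volume P).toReal ≤ ((3 / 8) * I) ^ 2 := by
    calc X * (volume P).toReal ≤ (∫ z : Euc (n + 1), a z ^ 2) * (2 * r * ((rho0 a) ^ n * kappa n)) := by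
          apply mul_le_mul hXle hVle hVnn (le_of_lt hI2)
      _ = r * (2 * kappa n * (rho0 a) ^ n * ∫ z : Euc (n + 1), a z ^ 2) := by ring
      _ ≤ ((3 / 8) * I) ^ 2 := hrD
  have hPle : ∫ z in P, a z ≤ (3 / 8) * I := by
    have hrw : X ^ ((1:ℝ)/2) * ((volume P).toReal) ^ ((1:ℝ)/2)
        = Real.sqrt (X * (volume P).toReal) := by
      rw [Real.sqrt_mul hXnn, Real.sqrt_eq_rpow, Real.sqrt_eq_rpow]
    have h1 : ∫ z in P, a z ≤ Real.sqrt (X * (volume P).toReal) := by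
      rw [← hrw]
      convert hCS using 3
    calc ∫ z in P, a z ≤ Real.sqrt (X * (volume P).toReal) := h1
      _ ≤ Real.sqrt (((3 / 8) * I) ^ 2) := Real.sqrt_le_sqrt hXV
      _ = (3 / 8) * I := Real.sqrt_sq (by linarith)
  -- put it together
  have hinter : ∫ z in P ∩ B, a z ≤ ∫ z in P, a z := by
    apply setIntegral_mono_set ha_int.integrableOn (ae_restrict_of_ae ha_nn)
    exact HasSubset.Subset.eventuallyLE Set.inter_subset_left
  have hdiff : ∫ z in B \ P, a z = (∫ z in B, a z) - ∫ z in P ∩ B, a z := by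
    rw [← Set.diff_inter_self_eq_diff]
    exact integral_diff (hPmeas.inter measurableSet_ball) ha_int.integrableOn
      Set.inter_subset_right
  rw [hdiff]
  linarith [hB_ge, hPle, hinter]
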